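/- Let X be a globally causally closed Lorentzian pre-length space with continuous τ and let α, β : (-π/2, π/2) → X be AdS-parallel AdS-lines. Then for every s ∈ (-π/2, π/2) there exists t ∈ (-π/2, π/2) with α(s) ≪ β(t), and likewise there exists t' with β(t') ≪ α(s). -/
import Mathlib


noncomputable section
open Real Set
open scoped Classical

/-- A Lorentzian pre-length space: a set with a metric, a chronological relation `≪`,
a causal relation `≤`, and a lower semicontinuous time separation function `τ`
satisfying `τ(x,y) > 0 ↔ x ≪ y` and the reverse triangle inequality. -/
structure LorentzianPreLengthSpace (X : Type*) [MetricSpace X] where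
  chron : X → X → Prop
  causal : X → X → Prop
  tau : X → X → ℝ
  causal_refl : ∀ x, causal x x
  causal_trans : ∀ {x y z}, causal x y → causal y z → causal x z
  chron_trans : ∀ {x y z}, chron x y → chron y z → chron x z
  chron_causal : ∀ {x y}, chron x y → causal x y
  tau_nonneg : ∀ x y, 0 ≤ tau x y
  tau_pos_iff : ∀ x y, 0 < tau x y ↔ chron x y
  tau_lsc : LowerSemicontinuous fun p : X × X => tau p.1 p.2
  rev_triangle : ∀ {x y z}, causal x y → causal y z → tau x y + tau y z ≤ tau x z

/-- The inverse hyperbolic cosine. -/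
def arcosh (x : ℝ) : ℝ := Real.log (x + Real.sqrt (x ^ 2 - 1))

/-- The causal relation of `AdS' = (-π/2,π/2) ×_cos ℝ`. -/
def adsLe (p q : ℝ × ℝ) : Prop :=
  p.1 ≤ q.1 ∧
    Real.sin p.1 * Real.sin q.1 + Real.cos p.1 * Real.cos q.1 * Real.cosh (q.2 - p.2) ≤ 1

/-- The time separation of `AdS' = (-π/2,π/2) ×_cos ℝ`. -/
def adsTau (p q : ℝ × ℝ) : ℝ :=
  if adsLe p q then
    Real.arccos (Real.sin p.1 * Real.sin q.1 +
      Real.cos p.1 * Real.cos q.1 * Real.cosh (q.2 - p.2))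
  else 0

/-- The parameter interval `(-π/2, π/2)` of AdS-lines. -/
def adsI : Set ℝ := Set.Ioo (-(π / 2)) (π / 2)

variable {X : Type*} [MetricSpace X]

/-- An AdS-line: an (inextendible) timelike distance realizer of `τ`-length `π`,
parametrized in `τ`-arclength on `(-π/2, π/2)`. -/
def IsAdSLine (L : LorentzianPreLengthSpace X) (γ : ℝ → X) : Prop :=
  ∀ s ∈ adsI, ∀ t ∈ adsI, s ≤ t → L.tau (γ s) (γ t) = t - s

/-- A parallel realization of two AdS-lines `α, β` at spacelike distance `c`: the map
sending `α(s) ↦ (s,0)` and `β(t) ↦ (t,c)` into `AdS' = (-π/2,π/2) ×_cos ℝ` is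
`τ`-preserving and `≤`-preserving on the union of the two lines. -/
def ParallelRealization (L : LorentzianPreLengthSpace X) (α β : ℝ → X) (c : ℝ) : Prop :=
  ∀ s ∈ adsI, ∀ t ∈ adsI,
    ((L.causal (α s) (α t) ↔ adsLe (s, 0) (t, 0)) ∧
      (L.causal (β s) (β t) ↔ adsLe (s, c) (t, c)) ∧
      (L.causal (α s) (β t) ↔ adsLe (s, 0) (t, c)) ∧
      (L.causal (β s) (α t) ↔ adsLe (s, c) (t, 0))) ∧
    (L.tau (α s) (α t) = adsTau (s, 0) (t, 0) ∧
      L.tau (β s) (β t) = adsTau (s, c) (t, c) ∧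
      L.tau (α s) (β t) = adsTau (s, 0) (t, c) ∧
      L.tau (β s) (α t) = adsTau (s, c) (t, 0))

/-- Two AdS-lines are AdS-parallel if they admit a parallel realization at some
distance `c ≥ 0`. -/
def AdSParallel (L : LorentzianPreLengthSpace X) (α β : ℝ → X) : Prop :=
  ∃ c, 0 ≤ c ∧ ParallelRealization L α β c

lemma sin_lt_one_of_mem_adsI {s : ℝ} (hs : s ∈ adsI) : Real.sin s < 1 := by
  have h := Real.strictMonoOn_sin (a := s) (b := π / 2)
    ⟨le_of_lt hs.1, le_of_lt hs.2⟩ ⟨by linarith [Real.pi_pos], le_refl _⟩ hs.2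
  simpa using h

lemma neg_one_lt_sin_of_mem_adsI {s : ℝ} (hs : s ∈ adsI) : -1 < Real.sin s := by
  have h := Real.strictMonoOn_sin (a := -(π / 2)) (b := s)
    ⟨le_refl _, by linarith [Real.pi_pos]⟩ ⟨le_of_lt hs.1, le_of_lt hs.2⟩ hs.1
  simpa using h

lemma future_exists {s : ℝ} (hs : s ∈ adsI) (c : ℝ) :
    ∃ t ∈ adsI, s ≤ t ∧
      Real.sin s * Real.sin t + Real.cos s * Real.cos t * Real.cosh c < 1 := by
  set f : ℝ → ℝ := fun t => Real.sin s * Real.sin t + Real.cos s * Real.cos t * Real.cosh c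
    with hf
  have hcont : ContinuousAt f (π / 2) := by fun_prop
  have hval : f (π / 2) = Real.sin s := by simp [hf]
  have h1 : ∀ᶠ t in nhdsWithin (π / 2) (Set.Iio (π / 2)), f t < 1 := by
    have hlt : f (π / 2) < 1 := by rw [hval]; exact sin_lt_one_of_mem_adsI hs
    have : ∀ᶠ t in nhds (π / 2), f t < 1 :=
      hcont.eventually_lt (g := fun _ => (1 : ℝ)) continuousAt_const hlt
    exact this.filter_mono nhdsWithin_le_nhds
  have h2 : ∀ᶠ t in nhdsWithin (π / 2) (Set.Iio (π / 2)), t ∈ Set.Ioo s (π / 2) :=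
    Ioo_mem_nhdsLT_of_mem ⟨hs.2, le_refl _⟩
  obtain ⟨t, htf, hts, htlt⟩ := (h1.and h2).exists
  exact ⟨t, ⟨lt_trans hs.1 hts, htlt⟩, le_of_lt hts, htf⟩

lemma past_exists {s : ℝ} (hs : s ∈ adsI) (c : ℝ) :
    ∃ t ∈ adsI, t ≤ s ∧
      Real.sin t * Real.sin s + Real.cos t * Real.cos s * Real.cosh c < 1 := by
  set f : ℝ → ℝ := fun t => Real.sin t * Real.sin s + Real.cos t * Real.cos s * Real.cosh c
    with hf
  have hcont : ContinuousAt f (-(π / 2)) := by fun_prop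
  have hval : f (-(π / 2)) = -Real.sin s := by simp [hf]
  have h1 : ∀ᶠ t in nhdsWithin (-(π / 2)) (Set.Ioi (-(π / 2))), f t < 1 := by
    have hlt : f (-(π / 2)) < 1 := by
      rw [hval]
      have := neg_one_lt_sin_of_mem_adsI hs
      linarith
    have : ∀ᶠ t in nhds (-(π / 2)), f t < 1 :=
      hcont.eventually_lt (g := fun _ => (1 : ℝ)) continuousAt_const hlt
    exact this.filter_mono nhdsWithin_le_nhds
  have h2 : ∀ᶠ t in nhdsWithin (-(π / 2)) (Set.Ioi (-(π / 2))),
      t ∈ Set.Ioo (-(π / 2)) s := Ioo_mem_nhdsGT_of_mem ⟨le_refl _, hs.1⟩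
  obtain ⟨t, htf, htgt, hts⟩ := (h1.and h2).exists
  exact ⟨t, ⟨htgt, lt_trans hts hs.2⟩, le_of_lt hts, htf⟩

/-- Communicability of AdS-parallel lines: in a globally causally closed Lorentzian
pre-length space with continuous `τ`, for every parameter `s` there are points of `β`
in the chronological future and in the chronological past of `α(s)`. -/
theorem parallel_lines_communicate
    (L : LorentzianPreLengthSpace X)
    (hclosed : IsClosed {p : X × X | L.causal p.1 p.2})
    (hcont : Continuous fun p : X × X => L.tau p.1 p.2)
    (α β : ℝ → X) (hα : IsAdSLine L α) (hβ : IsAdSLine L β)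
    (hpar : AdSParallel L α β) :
    ∀ s ∈ adsI, (∃ t ∈ adsI, L.chron (α s) (β t)) ∧ ∃ t' ∈ adsI, L.chron (β t') (α s) := by
  obtain ⟨c, _hc0, hpr⟩ := hpar
  intro s hs
  constructor
  · obtain ⟨t, ht, hst, hE⟩ := future_exists hs c
    refine ⟨t, ht, ?_⟩
    have hle : adsLe (s, 0) (t, c) := by
      refine ⟨hst, ?_⟩
      simpa using le_of_lt hE
    have htau : L.tau (α s) (β t) = adsTau (s, 0) (t, c) := ((hpr s hs t ht).2).2.2.1
    rw [← L.tau_pos_iff, htau]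
    rw [adsTau, if_pos hle]
    exact Real.arccos_pos.mpr (by simpa using hE)
  · obtain ⟨t, ht, hts, hE⟩ := past_exists hs c
    refine ⟨t, ht, ?_⟩
    have hle : adsLe (t, c) (s, 0) := by
      refine ⟨hts, ?_⟩
      simpa [Real.cosh_neg] using le_of_lt hE
    have htau : L.tau (β t) (α s) = adsTau (t, c) (s, 0) := ((hpr t ht s hs).2).2.2.2
    rw [← L.tau_pos_iff, htau]
    rw [adsTau, if_pos hle]
    exact Real.arccos_pos.mpr (by simpa [Real.cosh_neg] using hE)
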